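/- Let P = σ₁-σ₂ and Q = σ₁σ₂ be partially ordered generalized patterns (Q obtained from P by removing the dash). Then Av(P) = Av(Q) if and only if for every permutation of the form AXB in which the subsequence AB (with |A| = |σ₁|, |B| = |σ₂|, A the prefix, B the suffix) forms an occurrence of Q with A forming σ₁ and B forming σ₂, the permutation AXB itself contains an occurrence of Q. -/

import Mathlib

/-- `l` is a permutation of `{1, …, n}`. -/
def IsPermOf (n : ℕ) (l : List ℕ) : Prop :=
  l.Perm ((List.range n).map (· + 1))

/-- The word `w` forms (is an occurrence, using all its entries, of) the
partially ordered pattern word `σ`: equal letters of `σ` impose no constraint,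
and `σᵢ < σⱼ` forces `wᵢ < wⱼ`. -/
def FormsPOP (σ w : List ℕ) : Prop :=
  w.length = σ.length ∧
  ∀ i j, i < σ.length → j < σ.length →
    σ.getD i 0 < σ.getD j 0 → w.getD i 0 < w.getD j 0

/-- `Gapped ws π` holds when `π = g₀ ++ w₁ ++ g₁ ++ w₂ ++ ⋯ ++ wₖ ++ gₖ`, i.e. the
words in `ws` occur in order as contiguous blocks of `π`, with arbitrary gaps. -/
inductive Gapped : List (List ℕ) → List ℕ → Prop
  | nil (g : List ℕ) : Gapped [] g
  | cons (w : List ℕ) (ws : List (List ℕ)) (g rest : List ℕ) :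
      Gapped ws rest → Gapped (w :: ws) (g ++ w ++ rest)

/-- `π` contains an occurrence of the partially ordered generalized pattern whose
dash-separated contiguous segments are `segs`. -/
def OccursPOP (segs : List (List ℕ)) (π : List ℕ) : Prop :=
  ∃ ws : List (List ℕ), ws.length = segs.length ∧
    (∀ i, (ws.getD i []).length = (segs.getD i []).length) ∧
    FormsPOP segs.flatten ws.flatten ∧ Gapped ws π

/-!
A dashed occurrence of `σ₁-σ₂` in `π` is a factor `AXB` of `π` in which `AB` forms `σ₁σ₂`.
Whether a word forms a pattern depends only on the relative order of its entries, so
standardizing such a factor to a permutation, applying the hypothesis and pulling the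
contiguous occurrence back gives an occurrence of `σ₁σ₂` in `π`. Conversely `AXB` is itself
a dashed occurrence, and a contiguous occurrence always splits into a dashed one.
-/

theorem gapped_singleton_iff {v π : List ℕ} : Gapped [v] π ↔ v <:+: π := by
  constructor
  · rintro (_ | ⟨_, _, g, rest, _⟩)
    exact ⟨g, rest, rfl⟩
  · rintro ⟨g, rest, rfl⟩
    exact .cons _ _ _ _ (.nil _)

theorem gapped_pair_iff {a b π : List ℕ} : Gapped [a, b] π ↔ ∃ g, a ++ g ++ b <:+: π := by
  constructor
  · rintro (_ | ⟨_, _, g₀, rest, hrest⟩)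
    obtain ⟨g₁, g₂, rfl⟩ := gapped_singleton_iff.mp hrest
    exact ⟨g₁, g₀, g₂, by simp⟩
  · rintro ⟨g, g₀, g₂, rfl⟩
    have : g₀ ++ (a ++ g ++ b) ++ g₂ = g₀ ++ a ++ (g ++ b ++ g₂) := by simp
    rw [this]
    exact .cons _ _ _ _ (gapped_singleton_iff.mpr (List.infix_append _ _ _))

theorem FormsPOP.length_right {σ₁ σ₂ A B : List ℕ} (h : FormsPOP (σ₁ ++ σ₂) (A ++ B))
    (hA : A.length = σ₁.length) : B.length = σ₂.length := by
  have := h.1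
  simp only [List.length_append] at this
  omega

theorem occursPOP_singleton_iff {σ π : List ℕ} :
    OccursPOP [σ] π ↔ ∃ v, v <:+: π ∧ FormsPOP σ v := by
  constructor
  · rintro ⟨ws, hlen, -, hforms, hgap⟩
    obtain ⟨v, rfl⟩ := List.length_eq_one_iff.mp hlen
    exact ⟨v, gapped_singleton_iff.mp hgap, by simpa using hforms⟩
  · rintro ⟨v, hinf, hforms⟩
    refine ⟨[v], rfl, fun i => ?_, by simpa using hforms, gapped_singleton_iff.mpr hinf⟩
    cases i <;> simp [hforms.1]

theorem occursPOP_pair_iff {σ₁ σ₂ π : List ℕ} :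
    OccursPOP [σ₁, σ₂] π ↔
      ∃ A X B, A ++ X ++ B <:+: π ∧ A.length = σ₁.length ∧ FormsPOP (σ₁ ++ σ₂) (A ++ B) := by
  constructor
  · rintro ⟨ws, hlen, hlens, hforms, hgap⟩
    obtain ⟨A, B, rfl⟩ := List.length_eq_two.mp hlen
    obtain ⟨X, hinf⟩ := gapped_pair_iff.mp hgap
    exact ⟨A, X, B, hinf, by simpa using hlens 0, by simpa using hforms⟩
  · rintro ⟨A, X, B, hinf, hA, hforms⟩
    refine ⟨[A, B], rfl, fun i => ?_, by simpa using hforms, gapped_pair_iff.mpr ⟨X, hinf⟩⟩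
    rcases i with _ | _ | _ <;> simp [hA, hforms.length_right hA]

theorem occursPOP_pair_of_occursPOP_append {σ₁ σ₂ π : List ℕ}
    (h : OccursPOP [σ₁ ++ σ₂] π) : OccursPOP [σ₁, σ₂] π := by
  obtain ⟨v, hinf, hforms⟩ := occursPOP_singleton_iff.mp h
  have hv : v.length = σ₁.length + σ₂.length := by simpa using hforms.1
  exact occursPOP_pair_iff.mpr ⟨v.take σ₁.length, [], v.drop σ₁.length, by simpa using hinf,
    by simp [hv], by simpa using hforms⟩

theorem formsPOP_map_iff {σ u : List ℕ} {f : ℕ → ℕ} (hf : StrictMonoOn f {x | x ∈ u}) :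
    FormsPOP σ (u.map f) ↔ FormsPOP σ u := by
  rw [FormsPOP, FormsPOP, List.length_map]
  refine and_congr_right fun hlen => forall₂_congr fun i j => imp_congr_right fun hi =>
    imp_congr_right fun hj => imp_congr_right fun _ => ?_
  rw [← hlen] at hi hj
  simp only [List.getD_eq_getElem _ _ hi, List.getD_eq_getElem _ _ hj,
    List.getD_eq_getElem _ _ (u.length_map f ▸ hi), List.getD_eq_getElem _ _ (u.length_map f ▸ hj),
    List.getElem_map]
  exact hf.lt_iff_lt (List.getElem_mem _) (List.getElem_mem _)

theorem occursPOP_singleton_map_iff {σ w : List ℕ} {f : ℕ → ℕ}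
    (hf : StrictMonoOn f {x | x ∈ w}) :
    OccursPOP [σ] (w.map f) ↔ OccursPOP [σ] w := by
  simp only [occursPOP_singleton_iff, List.infix_map_iff]
  constructor
  · rintro ⟨_, ⟨v, hinf, rfl⟩, hforms⟩
    exact ⟨v, hinf, (formsPOP_map_iff (hf.mono fun x hx => hinf.subset hx)).mp hforms⟩
  · rintro ⟨v, hinf, hforms⟩
    exact ⟨_, ⟨v, hinf, rfl⟩, (formsPOP_map_iff (hf.mono fun x hx => hinf.subset hx)).mpr hforms⟩

theorem IsPermOf.nodup {n : ℕ} {π : List ℕ} (h : IsPermOf n π) : π.Nodup :=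
  h.nodup_iff.mpr (List.nodup_range.map (add_left_injective 1))

theorem exists_strictMonoOn_isPermOf_map {w : List ℕ} (hw : w.Nodup) :
    ∃ f : ℕ → ℕ, StrictMonoOn f {x | x ∈ w} ∧ IsPermOf w.length (w.map f) := by
  let e := w.toFinset.orderIsoOfFin (List.toFinset_card_of_nodup hw)
  let f : ℕ → ℕ := fun x => if hx : x ∈ w.toFinset then (e.symm ⟨x, hx⟩ : ℕ) + 1 else 0
  have hf : StrictMonoOn f {x | x ∈ w} := by
    intro x hx y hy hxy
    simp only [f, List.mem_toFinset.mpr hx, List.mem_toFinset.mpr hy, dif_pos]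
    exact Nat.succ_lt_succ (e.symm.strictMono hxy)
  refine ⟨f, hf, ?_⟩
  have hsub : w.map f ⊆ (List.range w.length).map (· + 1) := by
    intro y hy
    obtain ⟨x, hx, rfl⟩ := List.mem_map.mp hy
    simp only [f, List.mem_toFinset.mpr hx, dif_pos]
    exact List.mem_map_of_mem (List.mem_range.mpr (e.symm ⟨x, _⟩).isLt)
  exact ((hw.map_on hf.injOn).subperm hsub).perm_of_length_le (by simp)

theorem av_eq_iff_axb_general (σ₁ σ₂ : List ℕ) :
    (∀ (n : ℕ) (π : List ℕ), IsPermOf n π →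
        (¬ OccursPOP [σ₁, σ₂] π ↔ ¬ OccursPOP [σ₁ ++ σ₂] π)) ↔
    (∀ (n : ℕ) (A X B : List ℕ), IsPermOf n (A ++ X ++ B) →
        A.length = σ₁.length → B.length = σ₂.length →
        FormsPOP (σ₁ ++ σ₂) (A ++ B) →
        OccursPOP [σ₁ ++ σ₂] (A ++ X ++ B)) := by
  constructor
  · intro hav n A X B hperm hA _ hAB
    have hP : OccursPOP [σ₁, σ₂] (A ++ X ++ B) :=
      occursPOP_pair_iff.mpr ⟨A, X, B, List.infix_rfl, hA, hAB⟩
    by_contra hQ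
    exact (hav n _ hperm).mpr hQ hP
  · intro haxb n π hperm
    refine not_congr ⟨fun hP => ?_, occursPOP_pair_of_occursPOP_append⟩
    obtain ⟨A, X, B, hinf, hA, hAB⟩ := occursPOP_pair_iff.mp hP
    obtain ⟨f, hf, hstd⟩ := exists_strictMonoOn_isPermOf_map (hinf.sublist.nodup hperm.nodup)
    have hABf : FormsPOP (σ₁ ++ σ₂) (A.map f ++ B.map f) := by
      have hsub : A ++ B ⊆ A ++ X ++ B :=
        ((List.sublist_append_left A X).append (List.Sublist.refl B)).subset
      rwa [← List.map_append, formsPOP_map_iff (hf.mono fun _ hx => hsub hx)]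
    have hQ := haxb _ (A.map f) (X.map f) (B.map f) (by simpa using hstd) (by simpa using hA)
      (by simpa using hAB.length_right hA) hABf
    simp only [← List.map_append] at hQ
    obtain ⟨v, hv, hforms⟩ := occursPOP_singleton_iff.mp ((occursPOP_singleton_map_iff hf).mp hQ)
    exact occursPOP_singleton_iff.mpr ⟨v, hv.trans hinf, hforms⟩

/-- Lemma pop: for `P = σ₁-σ₂` and `Q = σ₁σ₂`, `Av(P) = Av(Q)` iff every
permutation `AXB`, with `A` of length `|σ₁|` and `B` of length `|σ₂|` such that
`AB` forms `Q` (so `A` forms `σ₁` and `B` forms `σ₂`), contains an occurrence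
of `Q`. -/
theorem av_eq_iff_axb (σ₁ σ₂ : List ℕ) (h₁ : σ₁ ≠ []) (h₂ : σ₂ ≠ []) :
    (∀ (n : ℕ) (π : List ℕ), IsPermOf n π →
        (¬ OccursPOP [σ₁, σ₂] π ↔ ¬ OccursPOP [σ₁ ++ σ₂] π)) ↔
    (∀ (n : ℕ) (A X B : List ℕ), IsPermOf n (A ++ X ++ B) →
        A.length = σ₁.length → B.length = σ₂.length →
        FormsPOP (σ₁ ++ σ₂) (A ++ B) →
        OccursPOP [σ₁ ++ σ₂] (A ++ X ++ B)) :=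
  av_eq_iff_axb_general σ₁ σ₂
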